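/- For the common HOMFLY-PT homology polynomial H(a,q,t) of the Conway and Kinoshita-Terasaka knots (given explicitly), every monomial a^i q^j t^k appearing with nonzero coefficient satisfies: for all integers k' ≥ 1 and N ≥ 3, there is no other monomial a^{i'} q^{j'} t^{k'} with nonzero coefficient in H such that (i' - i, j' - j, k'' ) = (-2k', 2Nk', 1) for the t-exponents differing by 1; i.e. the differential d_{k'}(N) of degree (-2k', 2Nk', 1) vanishes on H for all N ≥ 3 for degree reasons. -/

import Mathlib

/-!
Every degree `(-2k, 2Nk, 1)` with `k ≥ 1` and `N ≥ 3` lies in the cone of shifts of `t`-degree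
`1`, `a`-degree at most `-2` and `q`-degree at least `-3` times the `a`-degree. This cone does not
depend on `N` or `k`, so a single finite check over pairs of monomials of `H` shows that no two of
them differ by an element of it.
-/

/-- The set of (a,q,t)-degrees of the monomials appearing with nonzero
coefficient in the common reduced HOMFLY-PT homology of the Conway and
Kinoshita-Terasaka knots. -/
def Hsupport : Finset (ℤ × ℤ × ℤ) :=
  { (2,4,-5),
    (0,6,-4), (2,2,-4),
    (2,0,-3), (0,4,-3),
    (0,2,-2), (2,-2,-2), (0,4,-2),
    (-2,6,-1), (2,-4,-1), (-2,4,-1), (0,0,-1), (0,2,-1),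
    (0,0,0), (0,-2,0), (-2,2,0), (-2,4,0),
    (-2,2,1), (0,-2,1), (-2,0,1), (0,-4,1),
    (-4,4,2), (0,-6,2), (-2,0,2), (0,-4,2), (-2,-2,2),
    (-2,-2,3), (-4,2,3), (-2,-4,3),
    (-4,0,4), (-2,-4,4),
    (-4,-2,5), (-2,-6,5),
    (-4,-4,6) }

def differentialDegree (N k : ℤ) : ℤ × ℤ × ℤ := (-2 * k, 2 * N * k, 1)

def InDifferentialCone (N₀ : ℤ) (v : ℤ × ℤ × ℤ) : Prop :=
  v.2.2 = 1 ∧ v.1 ≤ -2 ∧ -N₀ * v.1 ≤ v.2.1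

theorem differentialDegree_inDifferentialCone {N₀ N k : ℤ} (hk : 1 ≤ k) (hN : N₀ ≤ N) :
    InDifferentialCone N₀ (differentialDegree N k) := by
  refine ⟨rfl, show -2 * k ≤ -2 by omega, ?_⟩
  show -N₀ * (-2 * k) ≤ 2 * N * k
  nlinarith

theorem Hsupport_sub_not_inDifferentialCone :
    ∀ m ∈ Hsupport, ∀ m' ∈ Hsupport, ¬ InDifferentialCone 3 (m' - m) := by
  unfold InDifferentialCone
  decide

/-- The differential d_k(N), of (a,q,t)-degree (-2k, 2Nk, 1), vanishes on the
HOMFLY-PT homology of the Conway/KT knots for all N ≥ 3 and k ≥ 1 for degree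
reasons: no two monomials differ in degree by (-2k, 2Nk, 1). -/
theorem differentials_vanish_degree_reasons :
    ∀ m ∈ Hsupport, ∀ m' ∈ Hsupport, ∀ k N : ℤ, 1 ≤ k → 3 ≤ N →
      m' - m ≠ (-2 * k, 2 * N * k, 1) := by
  intro m hm m' hm' k N hk hN hdeg
  have hcone : InDifferentialCone 3 (differentialDegree N k) :=
    differentialDegree_inDifferentialCone hk hN
  rw [differentialDegree, ← hdeg] at hcone
  exact Hsupport_sub_not_inDifferentialCone m hm m' hm' hcone
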